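/- Let σ, r, h, p be strictly positive real numbers, set λ := √(2r)/σ, let c₁, c₂ be real numbers, and let d < 0 < u be real numbers. Define V : ℝ → ℝ by V(x) := (h/r)·x + c₁·exp(λx) + c₂·exp(−λx) for x ≥ 0 and V(x) := −(p/r)·x + (c₁ + (h+p)/(2rλ))·exp(λx) + (c₂ − (h+p)/(2rλ))·exp(−λx) for x < 0. Then: (i) V is differentiable on (d, u) (the two branches match in value and first derivative at x = 0); and (ii) for every x ∈ (d, u) with x ≠ 0, V is twice differentiable at x and (σ²/2)·V″(x) − r·V(x) + max(h·x, −p·x) = 0. -/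

import Mathlib

/-!
Each branch of `V` has the form `a x + b e^{λx} + c e^{-λx}`, whose second derivative is
`λ² (V - a x)`; since `(σ²/2) λ² = r`, it solves `(σ²/2) V'' - r V + r a x = 0`, and `r a x` is
`max (h x) (-p x)` on the respective half-line. The shift `±(h+p)/(2rλ)` of the exponential
coefficients on `x < 0` leaves `V(0)` unchanged and raises `V'(0)` by exactly `(h+p)/r`, which
compensates the jump of the linear slope from `h/r` to `-p/r`, so the two branches glue to a
differentiable function.
-/

open Real Filter Topology

theorem hasDerivAt_exp_const_mul (m x : ℝ) :
    HasDerivAt (fun y => exp (m * y)) (m * exp (m * x)) x := by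
  simpa [mul_comm] using ((hasDerivAt_id x).const_mul m).exp

theorem HasDerivAt.ite_le {E : Type*} [NormedAddCommGroup E] [NormedSpace ℝ E]
    {f g : ℝ → E} {f' : E} {a : ℝ} (hf : HasDerivAt f f' a) (hg : HasDerivAt g f' a)
    (hfg : f a = g a) : HasDerivAt (fun x => if a ≤ x then f x else g x) f' a := by
  have hright : HasDerivWithinAt (fun x => if a ≤ x then f x else g x) f' (Set.Ici a) a :=
    hf.hasDerivWithinAt.congr (fun x hx => if_pos hx) (if_pos le_rfl)
  have hleft : HasDerivWithinAt (fun x => if a ≤ x then f x else g x) f' (Set.Iic a) a := by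
    refine hg.hasDerivWithinAt.congr (fun x hx => ?_) (by simp [hfg])
    rcases (Set.mem_Iic.mp hx).lt_or_eq with hlt | rfl
    · exact if_neg (not_le.mpr hlt)
    · simp [hfg]
  have := hleft.union hright
  rwa [Set.Iic_union_Ici, hasDerivWithinAt_univ] at this

theorem ite_le_eventuallyEq_of_lt {α : Type*} {f g : ℝ → α} {a x : ℝ} (hx : a < x) :
    (fun y => if a ≤ y then f y else g y) =ᶠ[𝓝 x] f := by
  filter_upwards [Ioi_mem_nhds hx] with y hy using if_pos (le_of_lt hy)

theorem ite_le_eventuallyEq_of_gt {α : Type*} {f g : ℝ → α} {a x : ℝ} (hx : x < a) :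
    (fun y => if a ≤ y then f y else g y) =ᶠ[𝓝 x] g := by
  filter_upwards [Iio_mem_nhds hx] with y hy using if_neg (not_le.mpr hy)

noncomputable def affineExpSum (a b c l : ℝ) (x : ℝ) : ℝ :=
  a * x + b * exp (l * x) + c * exp (-l * x)

namespace affineExpSum

variable (a b c l : ℝ)

theorem hasDerivAt (x : ℝ) :
    HasDerivAt (affineExpSum a b c l) (a + l * (b * exp (l * x) - c * exp (-l * x))) x := by
  refine ((((hasDerivAt_id' x).const_mul a).add ((hasDerivAt_exp_const_mul l x).const_mul b)).add
    ((hasDerivAt_exp_const_mul (-l) x).const_mul c)).congr_deriv ?_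
  ring

theorem deriv_eq :
    deriv (affineExpSum a b c l) = fun x => a + l * (b * exp (l * x) - c * exp (-l * x)) :=
  funext fun x => (hasDerivAt a b c l x).deriv

theorem hasDerivAt_deriv (x : ℝ) :
    HasDerivAt (deriv (affineExpSum a b c l)) (l ^ 2 * (affineExpSum a b c l x - a * x)) x := by
  rw [deriv_eq]
  refine ((((hasDerivAt_exp_const_mul l x).const_mul b).sub
    ((hasDerivAt_exp_const_mul (-l) x).const_mul c)).const_mul l |>.const_add a).congr_deriv ?_
  simp only [affineExpSum]
  ring

theorem hjb_of_eventuallyEq {V : ℝ → ℝ} {σ r x : ℝ} (hV : V =ᶠ[𝓝 x] affineExpSum a b c l)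
    (hl : σ ^ 2 / 2 * l ^ 2 = r) :
    DifferentiableAt ℝ (deriv V) x ∧ σ ^ 2 / 2 * deriv (deriv V) x - r * V x + r * a * x = 0 := by
  have hV' := hV.deriv
  refine ⟨(hasDerivAt_deriv a b c l x).differentiableAt.congr_of_eventuallyEq hV', ?_⟩
  rw [hV'.deriv_eq, (hasDerivAt_deriv a b c l x).deriv, hV.eq_of_nhds, ← hl]
  ring

end affineExpSum

theorem mfg_candidate_solves_HJB_general
    (σ r h p : ℝ) (hσ : 0 < σ) (hr : 0 < r) (hh : 0 < h) (hp : 0 < p)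
    (c₁ c₂ d u : ℝ) :
    let lam : ℝ := Real.sqrt (2 * r) / σ
    let V : ℝ → ℝ := fun x =>
      if 0 ≤ x then
        h / r * x + c₁ * Real.exp (lam * x) + c₂ * Real.exp (-lam * x)
      else
        -(p / r) * x + (c₁ + (h + p) / (2 * r * lam)) * Real.exp (lam * x)
          + (c₂ - (h + p) / (2 * r * lam)) * Real.exp (-lam * x)
    (∀ x ∈ Set.Ioo d u, DifferentiableAt ℝ V x) ∧
    (∀ x ∈ Set.Ioo d u, x ≠ 0 →
      DifferentiableAt ℝ (deriv V) x ∧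
        σ ^ 2 / 2 * deriv (deriv V) x - r * V x + max (h * x) (-p * x) = 0) := by
  intro lam V
  set K := (h + p) / (2 * r * lam)
  set f := affineExpSum (h / r) c₁ c₂ lam
  set g := affineExpSum (-(p / r)) (c₁ + K) (c₂ - K) lam
  have hlam : lam ≠ 0 := (div_pos (sqrt_pos.mpr (by positivity)) hσ).ne'
  have hlam_sq : σ ^ 2 / 2 * lam ^ 2 = r := by
    simp only [lam, div_pow, sq_sqrt (by positivity : (0 : ℝ) ≤ 2 * r)]
    field_simp
  have hdiff : ∀ x, DifferentiableAt ℝ V x := by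
    intro x
    rcases lt_trichotomy x 0 with hx | rfl | hx
    · exact (affineExpSum.hasDerivAt _ _ _ _ x).differentiableAt.congr_of_eventuallyEq
        (ite_le_eventuallyEq_of_gt hx)
    · have hslope : (-(p / r)) + lam * ((c₁ + K) * exp (lam * 0) - (c₂ - K) * exp (-lam * 0))
          = h / r + lam * (c₁ * exp (lam * 0) - c₂ * exp (-lam * 0)) := by
        simp only [K, mul_zero, exp_zero]
        field_simp
        ring
      have hval : f 0 = g 0 := by simp [f, g, affineExpSum]
      exact (HasDerivAt.ite_le (affineExpSum.hasDerivAt _ _ _ _ 0)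
        ((affineExpSum.hasDerivAt _ _ _ _ 0).congr_deriv hslope) hval).differentiableAt
    · exact (affineExpSum.hasDerivAt _ _ _ _ x).differentiableAt.congr_of_eventuallyEq
        (ite_le_eventuallyEq_of_lt hx)
  refine ⟨fun x _ => hdiff x, fun x _ hx => ?_⟩
  rcases hx.lt_or_gt with hx | hx
  · rw [max_eq_right (by nlinarith), show -p * x = r * -(p / r) * x by field_simp]
    exact affineExpSum.hjb_of_eventuallyEq _ _ _ _ (ite_le_eventuallyEq_of_gt hx) hlam_sq
  · rw [max_eq_left (by nlinarith), show h * x = r * (h / r) * x by field_simp]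
    exact affineExpSum.hjb_of_eventuallyEq _ _ _ _ (ite_le_eventuallyEq_of_lt hx) hlam_sq

/-- The explicit candidate payoff of the mean-field cash management game is C¹
across x = 0 and solves the HJB ODE (σ²/2)V″ − rV + max(hx, −px) = 0 in the
continuation region away from x = 0. -/
theorem mfg_candidate_solves_HJB
    (σ r h p : ℝ) (hσ : 0 < σ) (hr : 0 < r) (hh : 0 < h) (hp : 0 < p)
    (c₁ c₂ d u : ℝ) (hd : d < 0) (hu : 0 < u) :
    let lam : ℝ := Real.sqrt (2 * r) / σ
    let V : ℝ → ℝ := fun x =>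
      if 0 ≤ x then
        h / r * x + c₁ * Real.exp (lam * x) + c₂ * Real.exp (-lam * x)
      else
        -(p / r) * x + (c₁ + (h + p) / (2 * r * lam)) * Real.exp (lam * x)
          + (c₂ - (h + p) / (2 * r * lam)) * Real.exp (-lam * x)
    (∀ x ∈ Set.Ioo d u, DifferentiableAt ℝ V x) ∧
    (∀ x ∈ Set.Ioo d u, x ≠ 0 →
      DifferentiableAt ℝ (deriv V) x ∧
        σ ^ 2 / 2 * deriv (deriv V) x - r * V x + max (h * x) (-p * x) = 0) :=
  mfg_candidate_solves_HJB_general σ r h p hσ hr hh hp c₁ c₂ d u
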